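/- arXiv:1306.5371 — 8 statements merged into one kernel-verified Lean document; each statement's English description precedes it below -/
import Mathlib

section
/- For any positive integers m, n, y, z with gcd(n,y)=1, and integers K ≥ L ≥ 0, every coefficient in the power series expansion of 1/((q^z;q^m)_K (q^{nyz};q^{nm})_L) − 1/((q^{yz};q^m)_K (q^{nz};q^{nm})_L) is nonnegative. -/
/-!
The coefficient of `q^x` in `∏ 1/(1 - q^{e_i})` counts the ways to write `x = ∑ cᵢ eᵢ` with
`cᵢ ≥ 0`, so it suffices to inject representations by the parts `yz + jm` (`j < K`) and
`nz + inm` (`i < L`) into representations by the parts `z + jm` and `nyz + inm`, preserving `x`.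
Write the multiplicity of `yz + jm` as `c_j = n b_j + r_j` with `r_j < n` when `j < L`. The `b_j`
copies of `n(yz + jm)` become parts `nyz + jnm`, each of the `d_i` parts `n(z + im)` splits into
`n` parts `z + im`, and `r_j (yz + jm) = r_j (z + jm) + (y - 1) z r_j`, the surplus
`(y - 1) z ∑ r_j` going to the smallest part `z`. The image gives the `b_j`, and `r_j + n d_j` for
`j ≥ 1`, hence `r_j` and `d_j`; the multiplicity of `z` then gives `y r_0 + n d_0`, which determines
`(r_0, d_0)` because `gcd(n, y) = 1` and `r_0 < n`.
-/

open Finset PowerSeries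

/-- `(q^c; q^m)_L = ∏_{j=0}^{L-1} (1 - q^{c+jm})` as a formal power series over `ℚ`. -/
noncomputable def qp (c m L : ℕ) : PowerSeries ℚ :=
  ∏ j ∈ Finset.range L, (1 - (PowerSeries.X : PowerSeries ℚ) ^ (c + j * m))

section GeomSeries

variable {R : Type*}

noncomputable def geomSeries [Semiring R] (e : ℕ) : R⟦X⟧ :=
  mk fun x => if e ∣ x then 1 else 0

theorem geomSeries_mul_one_sub_X_pow [Ring R] {e : ℕ} (he : 0 < e) :
    geomSeries e * (1 - X ^ e : R⟦X⟧) = 1 := by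
  ext x
  rw [mul_sub, mul_one, map_sub, coeff_mul_X_pow', coeff_one]
  simp only [geomSeries, coeff_mk]
  by_cases hex : e ≤ x
  · obtain ⟨x, rfl⟩ := Nat.exists_eq_add_of_le' hex
    simp [Nat.dvd_add_self_right, he.ne']
  · have : e ∣ x ↔ x = 0 := ⟨fun h => Nat.eq_zero_of_dvd_of_lt h (by omega), by rintro rfl; simp⟩
    simp [hex, this]

theorem inv_prod_one_sub_X_pow [Field R] {ι : Type*} (s : Finset ι) {E : ι → ℕ}
    (hE : ∀ i ∈ s, 0 < E i) :
    (∏ i ∈ s, (1 - X ^ E i : R⟦X⟧))⁻¹ = ∏ i ∈ s, geomSeries (E i) := by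
  have h : (∏ i ∈ s, geomSeries (E i)) * ∏ i ∈ s, (1 - X ^ E i : R⟦X⟧) = 1 := by
    rw [← prod_mul_distrib]
    exact prod_eq_one fun i hi => geomSeries_mul_one_sub_X_pow (hE i hi)
  refine (inv_eq_iff_mul_eq_one ?_).2 h
  exact right_ne_zero_of_mul_eq_one (by rw [← map_mul, h, map_one])

theorem coeff_prod_geomSeries [CommSemiring R] {ι : Type*} [DecidableEq ι] (s : Finset ι)
    (E : ι → ℕ) (x : ℕ) :
    coeff x (∏ i ∈ s, geomSeries (R := R) (E i)) =
      #{l ∈ finsuppAntidiag s x | ∀ i ∈ s, E i ∣ l i} := by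
  rw [coeff_prod, ← sum_boole]
  refine sum_congr rfl fun l _ => ?_
  simp only [geomSeries, coeff_mk]
  exact prod_boole

theorem coeff_inv_prod_le_of_injOn [Field R] [LinearOrder R] [IsStrictOrderedRing R]
    {ι κ : Type*} [DecidableEq ι] [DecidableEq κ]
    {s : Finset ι} {t : Finset κ} {E : ι → ℕ} {F : κ → ℕ}
    (hE : ∀ i ∈ s, 0 < E i) (hF : ∀ j ∈ t, 0 < F j) (ψ : (ι → ℕ) → κ → ℕ)
    (hψ_weight : ∀ c, ∑ j ∈ t, ψ c j * F j = ∑ i ∈ s, c i * E i)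
    (hψ_inj : ∀ c c', Set.EqOn (ψ c) (ψ c') t → Set.EqOn c c' s) (x : ℕ) :
    coeff x (∏ i ∈ s, (1 - X ^ E i : R⟦X⟧))⁻¹ ≤ coeff x (∏ j ∈ t, (1 - X ^ F j : R⟦X⟧))⁻¹ := by
  rw [inv_prod_one_sub_X_pow s hE, inv_prod_one_sub_X_pow t hF, coeff_prod_geomSeries,
    coeff_prod_geomSeries, Nat.cast_le]
  -- a representation by parts `E i` with part sums `l i` has multiplicities `l i / E i`
  let lift (l : ι →₀ ℕ) : κ →₀ ℕ := Finsupp.indicator t fun j _ => ψ (fun i => l i / E i) j * F j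
  have lift_apply : ∀ l, ∀ j ∈ t, lift l j = ψ (fun i => l i / E i) j * F j := fun l j hj => by
    simp [lift, Finsupp.indicator_apply, hj]
  refine card_le_card_of_injOn lift ?_ ?_
  · intro l hl
    simp only [coe_filter, Set.mem_ofPred_eq, mem_finsuppAntidiag] at hl ⊢
    obtain ⟨⟨hsum, -⟩, hdvd⟩ := hl
    refine ⟨⟨?_, Finsupp.support_indicator_subset _ _⟩, fun j hj => ?_⟩
    · rw [sum_congr rfl (lift_apply l), hψ_weight, ← hsum]
      exact sum_congr rfl fun i hi => Nat.div_mul_cancel (hdvd i hi)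
    · rw [lift_apply l j hj]
      exact dvd_mul_left _ _
  · intro l hl l' hl' hll'
    simp only [coe_filter, Set.mem_ofPred_eq, mem_finsuppAntidiag] at hl hl'
    obtain ⟨⟨-, hsupp⟩, hdvd⟩ := hl
    obtain ⟨⟨-, hsupp'⟩, hdvd'⟩ := hl'
    have hmult : Set.EqOn (fun i => l i / E i) (fun i => l' i / E i) s :=
      hψ_inj _ _ fun j hj => Nat.eq_of_mul_eq_mul_right (hF j hj) (by
        rw [← lift_apply l j hj, ← lift_apply l' j hj, hll'])
    ext i
    by_cases hi : i ∈ s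
    · rw [← Nat.div_mul_cancel (hdvd i hi), ← Nat.div_mul_cancel (hdvd' i hi)]
      exact congrArg (· * E i) (hmult hi)
    · rw [Finsupp.notMem_support_iff.1 fun h => hi (hsupp h),
        Finsupp.notMem_support_iff.1 fun h => hi (hsupp' h)]

end GeomSeries

theorem qp_mul_qp (a m b m' K L : ℕ) :
    qp a m K * qp b m' L = ∏ i ∈ (range K).disjSum (range L),
      (1 - X ^ Sum.elim (fun j => a + j * m) (fun j => b + j * m') i) := by
  rw [prod_disjSum]
  rfl

theorem sum_elim_add_mul_pos {a b : ℕ} (ha : 0 < a) (hb : 0 < b) (m m' : ℕ) (i : ℕ ⊕ ℕ) :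
    0 < Sum.elim (fun j => a + j * m) (fun j => b + j * m') i := by
  cases i <;> simp only [Sum.elim_inl, Sum.elim_inr] <;> omega

section Transfer

variable (n y K L : ℕ)

def residue (c : ℕ → ℕ) (j : ℕ) : ℕ := if j < L then c j % n else c j

/-- `c (inl j)` and `c (inr i)` are the multiplicities of the parts `y z + j m` and
`n z + i (n m)`; the image gives those of the parts `z + j m` and `n y z + i (n m)`. -/
def transfer (c : ℕ ⊕ ℕ → ℕ) : ℕ ⊕ ℕ → ℕ :=
  Sum.elim
    (fun j => residue n L (c ∘ Sum.inl) j + (if j < L then n * c (Sum.inr j) else 0) +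
      if j = 0 then (y - 1) * ∑ i ∈ range K, residue n L (c ∘ Sum.inl) i else 0)
    fun i => c (Sum.inl i) / n

theorem residue_add_mul_div (c : ℕ → ℕ) (j : ℕ) :
    residue n L c j + (if j < L then n * (c j / n) else 0) = c j := by
  unfold residue
  split_ifs <;> simp [Nat.mod_add_div]

variable {n y K L}

theorem eq_of_residue_eq_of_div_eq {c c' : ℕ → ℕ} {j : ℕ}
    (hr : residue n L c j = residue n L c' j) (hdiv : j < L → c j / n = c' j / n) :
    c j = c' j := by
  rw [← residue_add_mul_div n L c j, ← residue_add_mul_div n L c' j, hr]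
  by_cases hj : j < L <;> simp [hj, hdiv]

theorem eq_of_mul_add_mul_eq_of_coprime (hco : n.Coprime y) {r r' d d' : ℕ} (hr : r < n)
    (hr' : r' < n) (h : y * r + n * d = y * r' + n * d') : r = r' ∧ d = d' := by
  have hmod : y * r ≡ y * r' [MOD n] := by
    simpa [Nat.ModEq, Nat.add_mul_mod_self_left] using congrArg (· % n) h
  have hrr : r = r' := by
    simpa [Nat.ModEq, Nat.mod_eq_of_lt hr, Nat.mod_eq_of_lt hr'] using
      Nat.ModEq.cancel_left_of_coprime hco hmod
  subst hrr
  exact ⟨rfl, Nat.eq_of_mul_eq_mul_left (by omega) (Nat.add_left_cancel h)⟩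

theorem residue_eq_of_mul_add_eq (hn : 0 < n) (hy : 0 < y) (hco : n.Coprime y)
    {c c' : ℕ → ℕ} {d d' j : ℕ}
    (h : y * residue n L c j + (if j < L then n * d else 0) =
      y * residue n L c' j + (if j < L then n * d' else 0)) :
    residue n L c j = residue n L c' j ∧ (j < L → d = d') := by
  by_cases hj : j < L
  · simp only [residue, hj, if_true] at h ⊢
    exact (eq_of_mul_add_mul_eq_of_coprime hco (Nat.mod_lt _ hn) (Nat.mod_lt _ hn) h).imp_right
      fun hd _ => hd
  · simp only [hj, if_false, add_zero] at h
    exact ⟨Nat.eq_of_mul_eq_mul_left hy h, fun h => absurd h hj⟩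

theorem transfer_injOn (hn : 0 < n) (hy : 0 < y) (hco : n.Coprime y) (hKL : L ≤ K)
    {c c' : ℕ ⊕ ℕ → ℕ}
    (h : Set.EqOn (transfer n y K L c) (transfer n y K L c') ((range K).disjSum (range L))) :
    Set.EqOn c c' ((range K).disjSum (range L)) := by
  set r := residue n L (c ∘ Sum.inl)
  set r' := residue n L (c' ∘ Sum.inl)
  have hdiv : ∀ j < L, c (Sum.inl j) / n = c' (Sum.inl j) / n := fun j hj =>
    h (inr_mem_disjSum.2 (mem_range.2 hj))
  have hpos : ∀ j, 0 < j → j < K → r j = r' j ∧ (j < L → c (Sum.inr j) = c' (Sum.inr j)) := by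
    intro j hj0 hjK
    have hj := h (inl_mem_disjSum.2 (mem_range.2 hjK))
    simp only [transfer, Sum.elim_inl, hj0.ne', if_false, add_zero] at hj
    exact residue_eq_of_mul_add_eq hn one_pos (Nat.coprime_one_right n) (by simpa using hj)
  -- the part `z` also carries `(y - 1) * ∑ r`, whose terms other than `r 0` are now known
  have hzero : 0 < K → r 0 = r' 0 ∧ (0 < L → c (Sum.inr 0) = c' (Sum.inr 0)) := by
    intro hK
    have hT : ∑ i ∈ (range K).erase 0, r i = ∑ i ∈ (range K).erase 0, r' i :=
      sum_congr rfl fun i hi => (hpos i (Nat.pos_of_ne_zero (ne_of_mem_erase hi))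
        (mem_range.1 (mem_of_mem_erase hi))).1
    have h0 := h (inl_mem_disjSum.2 (mem_range.2 hK))
    simp only [transfer, Sum.elim_inl, if_true] at h0
    rw [← add_sum_erase _ _ (mem_range.2 hK), ← add_sum_erase _ _ (mem_range.2 hK), hT] at h0
    refine residue_eq_of_mul_add_eq hn hy hco ?_
    obtain ⟨y, rfl⟩ := Nat.exists_eq_add_one.2 hy
    simp only [Nat.add_sub_cancel] at h0
    linarith
  have hres : ∀ j < K, r j = r' j ∧ (j < L → c (Sum.inr j) = c' (Sum.inr j)) := fun j hj =>
    j.eq_zero_or_pos.elim (fun h0 => h0 ▸ hzero (by omega)) fun hj0 => hpos j hj0 hj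
  rintro (j | j) hj <;> simp only [mem_coe, inl_mem_disjSum, inr_mem_disjSum, mem_range] at hj
  · exact eq_of_residue_eq_of_div_eq (hres j hj).1 (hdiv j)
  · exact (hres j (by omega)).2 hj

theorem sum_transfer_mul (hy : 0 < y) (hKL : L ≤ K) (z m : ℕ) (c : ℕ ⊕ ℕ → ℕ) :
    ∑ j ∈ (range K).disjSum (range L),
        transfer n y K L c j * Sum.elim (fun j => z + j * m) (fun j => n * y * z + j * (n * m)) j =
      ∑ j ∈ (range K).disjSum (range L),
        c j * Sum.elim (fun j => y * z + j * m) (fun j => n * z + j * (n * m)) j := by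
  simp only [transfer, sum_disjSum, Sum.elim_inl, Sum.elim_inr]
  set r := residue n L (c ∘ Sum.inl)
  have hsum_range (f : ℕ → ℕ) :
      ∑ j ∈ range L, f j = ∑ j ∈ range K, if j < L then f j else 0 := by
    rw [← sum_filter]
    congr 1
    ext j
    simp only [mem_range, mem_filter]
    omega
  -- the surplus at `j = 0` turns each `r j * (z + j * m)` into `r j * (y * z + j * m)`
  have hsurplus : ∑ j ∈ range K, (y - 1) * z * r j =
      ∑ j ∈ range K, (if j = 0 then (y - 1) * ∑ i ∈ range K, r i else 0) * (z + j * m) := by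
    rcases K.eq_zero_or_pos with rfl | hK
    · simp
    · rw [eq_comm, sum_eq_single_of_mem 0 (mem_range.2 hK) fun j _ hj => by simp [hj]]
      simp only [if_true, add_zero, zero_mul, mul_sum, sum_mul]
      exact sum_congr rfl fun j _ => by ring
  apply Nat.add_right_cancel (m := ∑ j ∈ range K, (y - 1) * z * r j)
  conv_rhs => rw [hsurplus]
  rw [hsum_range, hsum_range, ← sum_add_distrib, ← sum_add_distrib, ← sum_add_distrib,
    ← sum_add_distrib]
  refine sum_congr rfl fun j _ => ?_
  generalize (if j = 0 then (y - 1) * ∑ i ∈ range K, r i else 0) = s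
  obtain ⟨y, rfl⟩ := Nat.exists_eq_add_one.2 hy
  have hc := residue_add_mul_div n L (c ∘ Sum.inl) j
  simp only [Function.comp_apply, Nat.add_sub_cancel] at hc ⊢
  generalize c (Sum.inl j) / n = b at hc ⊢
  rw [← hc]
  split_ifs <;> ring

end Transfer

theorem main_thm_general (m n y z K L : ℕ) (hn : 0 < n) (hy : 0 < y) (hz : 0 < z)
    (hco : Nat.Coprime n y) (hKL : L ≤ K) (x : ℕ) :
    0 ≤ PowerSeries.coeff (R := ℚ) x
      ((qp z m K * qp (n * y * z) (n * m) L)⁻¹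
        - (qp (y * z) m K * qp (n * z) (n * m) L)⁻¹) := by
  rw [qp_mul_qp, qp_mul_qp, map_sub, sub_nonneg]
  exact coeff_inv_prod_le_of_injOn
    (fun i _ => sum_elim_add_mul_pos (by positivity) (by positivity) _ _ i)
    (fun i _ => sum_elim_add_mul_pos hz (by positivity) _ _ i)
    (transfer n y K L) (sum_transfer_mul hy hKL z m) (fun _ _ => transfer_injOn hn hy hco hKL) x

theorem main_thm (m n y z K L : ℕ) (hm : 0 < m) (hn : 0 < n) (hy : 0 < y) (hz : 0 < z)
    (hco : Nat.Coprime n y) (hKL : L ≤ K) (x : ℕ) :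
    0 ≤ PowerSeries.coeff (R := ℚ) x
      ((qp z m K * qp (n * y * z) (n * m) L)⁻¹
        - (qp (y * z) m K * qp (n * z) (n * m) L)⁻¹) :=
  main_thm_general m n y z K L hn hy hz hco hKL x
end

section
/- For every positive integer x, the number of partitions of x into parts from the multiset {3, 7, 11, 36, 48} is greater than or equal to the number of partitions of x into parts from the multiset {9, 12, 16, 20, 21}. -/
/-!
Send a partition with `a` nines, `b` twelves, `c` sixteens, `d` twenties and `e` twenty-ones to
the partition of the same number obtained by trading four nines for a `36`, three sixteens for a
`48`, and splitting every remaining part as `9 = 3+3+3`, `12 = 3+3+3+3`, `16 = 3+3+3+7`,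
`20 = 3+3+3+11`, `21 = 7+7+7`. This map is injective: the numbers of `11`s, `36`s and `48`s give
`d`, `a / 4` and `c / 3`; the number `c % 3 + 3e` of `7`s gives `c % 3` and `e`; the number of
`3`s then gives `3 (a % 4) + 4b`, whose residue mod `4` fixes `a % 4 < 4`, and hence `b`.
-/

open Finset

namespace Nat.Partition

theorem card_restricted_le_of_injOn {n : ℕ} {P Q : ℕ → Prop} [DecidablePred P]
    [DecidablePred Q] (hQ : ¬Q 0) (g : Multiset ℕ → Multiset ℕ)
    (hg_mem : ∀ m : Multiset ℕ, (∀ i ∈ m, P i) → ∀ i ∈ g m, Q i)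
    (hg_sum : ∀ m : Multiset ℕ, (∀ i ∈ m, P i) → (g m).sum = m.sum)
    (hg_inj : Set.InjOn g {m | ∀ i ∈ m, P i}) :
    #(restricted n P) ≤ #(restricted n Q) := by
  have hparts : Function.Injective (parts : n.Partition → Multiset ℕ) :=
    fun _ _ ↦ Nat.Partition.ext
  rw [← Finset.card_image_of_injective (restricted n Q) hparts]
  refine card_le_card_of_injOn (fun p ↦ g p.parts) (fun p hp ↦ ?_) fun p hp q hq hpq ↦ ?_
  · simp only [restricted, coe_filter, mem_univ, true_and, Set.mem_ofPred_eq] at hp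
    have hQg := hg_mem _ hp
    refine mem_image.2 ⟨ofSums n (g p.parts) ((hg_sum _ hp).trans p.parts_sum), ?_, ?_⟩
    · simp only [restricted, mem_filter, mem_univ, true_and, ofSums_parts, Multiset.mem_filter]
      exact fun i hi ↦ hQg i hi.1
    · rw [ofSums_parts, Multiset.filter_eq_self]
      rintro i hi rfl
      exact hQ (hQg 0 hi)
  · simp only [restricted, coe_filter, mem_univ, true_and, Set.mem_ofPred_eq] at hp hq
    exact Nat.Partition.ext (hg_inj hp hq hpq)

end Nat.Partition

theorem Multiset.eq_of_count_eq_on {α : Type*} [DecidableEq α] {s : Finset α}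
    {m₁ m₂ : Multiset α} (h₁ : ∀ i ∈ m₁, i ∈ s) (h₂ : ∀ i ∈ m₂, i ∈ s)
    (h : ∀ i ∈ s, m₁.count i = m₂.count i) : m₁ = m₂ := by
  ext i
  by_cases hi : i ∈ s
  · exact h i hi
  · rw [Multiset.count_eq_zero.2 fun hm ↦ hi (h₁ i hm),
      Multiset.count_eq_zero.2 fun hm ↦ hi (h₂ i hm)]

namespace Parts37

def trade (a b c d e : ℕ) : Multiset ℕ :=
  Multiset.replicate (3 * (a % 4) + 4 * b + 3 * (c % 3) + 3 * d) 3 +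
  Multiset.replicate (c % 3 + 3 * e) 7 +
  Multiset.replicate d 11 +
  Multiset.replicate (a / 4) 36 +
  Multiset.replicate (c / 3) 48

theorem sum_trade (a b c d e : ℕ) :
    (trade a b c d e).sum = 9 * a + 12 * b + 16 * c + 20 * d + 21 * e := by
  simp only [trade, Multiset.sum_add, Multiset.sum_replicate, smul_eq_mul]
  omega

theorem mem_trade {a b c d e i : ℕ} (h : i ∈ trade a b c d e) :
    i ∈ ({3, 7, 11, 36, 48} : Finset ℕ) := by
  simp only [trade, Multiset.mem_add, Multiset.mem_replicate] at h
  simp only [mem_insert, mem_singleton]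
  omega

theorem eq_of_trade_eq {a b c d e a' b' c' d' e' : ℕ}
    (h : trade a b c d e = trade a' b' c' d' e') :
    a = a' ∧ b = b' ∧ c = c' ∧ d = d' ∧ e = e' := by
  have h3 := congrArg (Multiset.count 3) h
  have h7 := congrArg (Multiset.count 7) h
  have h11 := congrArg (Multiset.count 11) h
  have h36 := congrArg (Multiset.count 36) h
  have h48 := congrArg (Multiset.count 48) h
  simp [trade, Multiset.count_replicate] at h3 h7 h11 h36 h48
  omega

def tradeParts (m : Multiset ℕ) : Multiset ℕ :=
  trade (m.count 9) (m.count 12) (m.count 16) (m.count 20) (m.count 21)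

theorem sum_tradeParts {m : Multiset ℕ}
    (hm : ∀ i ∈ m, i ∈ ({9, 12, 16, 20, 21} : Finset ℕ)) :
    (tradeParts m).sum = m.sum := by
  rw [tradeParts, sum_trade, sum_multiset_count_of_subset m _ fun i hi ↦ hm i
    (Multiset.mem_toFinset.1 hi)]
  simp [sum_insert, mul_comm, add_assoc]

theorem tradeParts_injOn :
    Set.InjOn tradeParts {m | ∀ i ∈ m, i ∈ ({9, 12, 16, 20, 21} : Finset ℕ)} := by
  intro m hm m' hm' h
  obtain ⟨h9, h12, h16, h20, h21⟩ := eq_of_trade_eq h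
  refine Multiset.eq_of_count_eq_on hm hm' fun i hi ↦ ?_
  simp only [mem_insert, mem_singleton] at hi
  rcases hi with rfl | rfl | rfl | rfl | rfl <;> assumption

end Parts37

theorem parts_3_7_11_36_48_general (x : ℕ) :
    (Finset.univ.filter
        (fun p : Nat.Partition x => ∀ i ∈ p.parts, i ∈ ({9, 12, 16, 20, 21} : Finset ℕ))).card
      ≤ (Finset.univ.filter
        (fun p : Nat.Partition x => ∀ i ∈ p.parts, i ∈ ({3, 7, 11, 36, 48} : Finset ℕ))).card :=
  Nat.Partition.card_restricted_le_of_injOn (by decide) Parts37.tradeParts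
    (fun _ _ _ ↦ Parts37.mem_trade) (fun _ ↦ Parts37.sum_tradeParts) Parts37.tradeParts_injOn

theorem parts_3_7_11_36_48 (x : ℕ) (hx : 0 < x) :
    (Finset.univ.filter
        (fun p : Nat.Partition x => ∀ i ∈ p.parts, i ∈ ({9, 12, 16, 20, 21} : Finset ℕ))).card
      ≤ (Finset.univ.filter
        (fun p : Nat.Partition x => ∀ i ∈ p.parts, i ∈ ({3, 7, 11, 36, 48} : Finset ℕ))).card :=
  parts_3_7_11_36_48_general x
end

section
/- For any positive integers n and y with gcd(n,y)=1, and integers K ≥ L ≥ 0 and f ≥ 0, every coefficient of the polynomial Σ_{s,t≥0, s+nyt=f} C(K−1+s, s)_q · C(L−1+t, t)_{q^n} − Σ_{s,t≥0, sy+nt=f} C(K−1+s, s)_q · C(L−1+t, t)_{q^n} is nonnegative. -/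
open Polynomial Finset

/-- The Gaussian (q-)binomial coefficient `C(n,k)_q`, via the Pascal recurrence
`C(n+1,k+1)_q = C(n,k)_q + q^(k+1) C(n,k+1)_q`. -/
noncomputable def gb : ℕ → ℕ → Polynomial ℤ
  | _, 0 => 1
  | 0, _ + 1 => 0
  | n + 1, k + 1 => gb n k + Polynomial.X ^ (k + 1) * gb n (k + 1)

/-- `C(L-1+t, t)_q`, with the convention that for `L = 0` this is `C(t-1,t)_q`,
i.e. `1` if `t = 0` and `0` otherwise. -/
noncomputable def gbS (L t : ℕ) : Polynomial ℤ :=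
  if L = 0 then (if t = 0 then 1 else 0) else gb (L - 1 + t) t

/-! `C(K-1+s, s)_q` is the sum of `q ^ weight a` over the tuples `a : Fin K → ℕ` with `∑ a = s`,
where `weight a = ∑ i * a i`. Both sides therefore enumerate pairs `(a, b)` of tuples by
`q ^ (weight a + n * weight b)`, constrained by `∑ a + n y ∑ b = f`, resp. by
`y ∑ a + n ∑ b = f`, and it suffices to inject the second family into the first, preserving that
exponent. Write `a i = r i + n d i` with `r i < n` for `i < L` (and `r i = a i` otherwise); send
`(a, b)` to `(c, d)` with `c = r + n b`, plus `(y - 1) ∑ r` placed in the weight-zero slot `0`.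
Then `∑ c + n y ∑ d = y ∑ a + n ∑ b`, and the exponent is unchanged. Off slot `0`, `c i` recovers
`r i` and `b i`; in slot `0` it recovers `y r 0 + n b 0`, which determines both since
`gcd(n, y) = 1`. -/
lemma gb_zero_right (m : ℕ) : gb m 0 = 1 := by
  cases m <;> rfl

lemma gb_eq_zero_of_lt : ∀ {m k : ℕ}, m < k → gb m k = 0
  | 0, _ + 1, _ => rfl
  | m + 1, k + 1, h => by
    rw [gb, gb_eq_zero_of_lt (Nat.lt_of_succ_lt_succ h), gb_eq_zero_of_lt (Nat.lt_of_succ_lt h),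
      mul_zero, add_zero]

lemma gbS_zero_right (K : ℕ) : gbS K 0 = 1 := by
  cases K <;> simp [gbS, gb_zero_right]

lemma gbS_succ_left (K s : ℕ) : gbS (K + 1) s = gb (K + s) s := by
  simp [gbS]

lemma gbS_succ_right (K s : ℕ) : gbS K (s + 1) = gb (K + s) (s + 1) := by
  cases K with
  | zero => simp [gbS, gb_eq_zero_of_lt (Nat.lt_succ_self s)]
  | succ K => rw [gbS_succ_left, Nat.add_right_comm]; rfl

lemma gbS_succ_succ (K s : ℕ) :
    gbS (K + 1) (s + 1) = gbS (K + 1) s + X ^ (s + 1) * gbS K (s + 1) := by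
  rw [gbS_succ_left, gbS_succ_left, gbS_succ_right, ← Nat.add_assoc, gb]

lemma gbS_succ_left_eq_sum_antidiagonal (K : ℕ) : ∀ s : ℕ,
    gbS (K + 1) s = ∑ p ∈ antidiagonal s, X ^ p.2 * gbS K p.2
  | 0 => by simp [gbS_zero_right]
  | s + 1 => by
    rw [Nat.sum_antidiagonal_succ, gbS_succ_succ, gbS_succ_left_eq_sum_antidiagonal K s, add_comm]

def weight {k : ℕ} (a : Fin k → ℕ) : ℕ := ∑ i : Fin k, (i : ℕ) * a i

lemma weight_cons {k : ℕ} (m : ℕ) (r : Fin k → ℕ) :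
    weight (Fin.cons m r : Fin (k + 1) → ℕ) = ∑ i, r i + weight r := by
  simp only [weight, Fin.sum_univ_succ, Fin.cons_zero, Fin.cons_succ, Fin.val_zero, zero_mul,
    zero_add, Fin.val_succ, ← sum_add_distrib]
  exact sum_congr rfl fun i _ => by ring

lemma sum_antidiagonalTuple_succ_X_pow_weight (K s : ℕ) :
    ∑ a ∈ Nat.antidiagonalTuple (K + 1) s, (X : ℤ[X]) ^ weight a
      = ∑ p ∈ antidiagonal s, X ^ p.2 * ∑ r ∈ Nat.antidiagonalTuple K p.2, X ^ weight r := by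
  simp only [mul_sum, ← pow_add]
  rw [sum_sigma']
  refine sum_nbij' (fun a => ⟨(a 0, ∑ i, Fin.tail a i), Fin.tail a⟩) (fun m => Fin.cons m.1.1 m.2)
    ?_ ?_ (fun a _ => Fin.cons_self_tail a) ?_ ?_
  · intro a ha
    simp only [mem_sigma, HasAntidiagonal.mem_antidiagonal, Nat.mem_antidiagonalTuple, and_true]
    rw [← (Nat.mem_antidiagonalTuple.mp ha), Fin.sum_univ_succ]
    rfl
  · rintro ⟨⟨u, v⟩, r⟩ hm
    simp only [mem_sigma, HasAntidiagonal.mem_antidiagonal, Nat.mem_antidiagonalTuple] at hm ⊢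
    rw [Fin.sum_cons, hm.2, hm.1]
  · rintro ⟨⟨u, v⟩, r⟩ hm
    simp only [mem_sigma, Nat.mem_antidiagonalTuple] at hm
    simp only [Fin.cons_zero, Fin.tail_cons, hm.2]
  · intro a _
    conv_lhs => rw [← Fin.cons_self_tail a, weight_cons]

lemma gbS_eq_sum_X_pow_weight (K s : ℕ) :
    gbS K s = ∑ a ∈ Nat.antidiagonalTuple K s, (X : ℤ[X]) ^ weight a := by
  induction K generalizing s with
  | zero => cases s <;> simp [gbS, Nat.antidiagonalTuple_zero_zero, weight]
  | succ K ih =>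
    rw [gbS_succ_left_eq_sum_antidiagonal, sum_antidiagonalTuple_succ_X_pow_weight]
    simp only [ih]

lemma gbS_comp_X_pow_eq_sum (n L t : ℕ) :
    (gbS L t).comp ((X : ℤ[X]) ^ n) = ∑ b ∈ Nat.antidiagonalTuple L t, X ^ (n * weight b) := by
  simp only [gbS_eq_sum_X_pow_weight, Polynomial.sum_comp, X_pow_comp, ← pow_mul]

def pairsOver (K L : ℕ) (A : Finset (ℕ × ℕ)) : Finset ((Fin K → ℕ) × (Fin L → ℕ)) :=
  A.biUnion fun p => Nat.antidiagonalTuple K p.1 ×ˢ Nat.antidiagonalTuple L p.2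

lemma mem_pairsOver {K L : ℕ} {A : Finset (ℕ × ℕ)} {q : (Fin K → ℕ) × (Fin L → ℕ)} :
    q ∈ pairsOver K L A ↔ (∑ i, q.1 i, ∑ j, q.2 j) ∈ A := by
  simp [pairsOver, Nat.mem_antidiagonalTuple, and_comm, eq_comm]

lemma sum_gbS_mul_gbS_comp_X_pow (n K L : ℕ) (A : Finset (ℕ × ℕ)) :
    ∑ p ∈ A, gbS K p.1 * (gbS L p.2).comp ((X : ℤ[X]) ^ n)
      = ∑ q ∈ pairsOver K L A, X ^ (weight q.1 + n * weight q.2) := by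
  rw [pairsOver, sum_biUnion]
  · refine sum_congr rfl fun p _ => ?_
    rw [gbS_eq_sum_X_pow_weight, gbS_comp_X_pow_eq_sum, sum_mul_sum, sum_product]
    simp only [pow_add]
  · intro p _ p' _ hpp'
    simp only [Function.onFun, disjoint_left, mem_product, Nat.mem_antidiagonalTuple]
    rintro q ⟨h1, h2⟩ ⟨h1', h2'⟩
    exact hpp' (Prod.ext (h1.symm.trans h1') (h2.symm.trans h2'))

lemma coeff_sum_X_pow_sub_sum_X_pow_nonneg {R ι κ : Type*} [Ring R] [PartialOrder R]
    [IsOrderedRing R] {S : Finset ι} {T : Finset κ} {u : ι → ℕ} {v : κ → ℕ} (g : κ → ι)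
    (hmaps : Set.MapsTo g T S) (hinj : Set.InjOn g T) (hw : ∀ k ∈ T, u (g k) = v k) (x : ℕ) :
    0 ≤ (∑ i ∈ S, (X : R[X]) ^ u i - ∑ k ∈ T, X ^ v k).coeff x := by
  classical
  have himage : ∑ k ∈ T, (X : R[X]) ^ v k = ∑ i ∈ T.image g, X ^ u i := by
    rw [sum_image hinj]
    exact sum_congr rfl fun k hk => by rw [hw k hk]
  rw [himage, ← sum_sdiff (image_subset_iff.mpr hmaps), add_sub_cancel_right, finsetSum_coeff]
  exact sum_nonneg fun i _ => by
    rw [coeff_X_pow]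
    split_ifs <;> simp

lemma eq_and_eq_of_mul_add_mul_eq {n y u v u' v' : ℕ} (hco : Nat.Coprime n y) (hu : u < n)
    (hu' : u' < n) (h : y * u + n * v = y * u' + n * v') : u = u' ∧ v = v' := by
  have hmod : u ≡ u' [MOD n] := by
    refine Nat.ModEq.cancel_left_of_coprime hco ?_
    simpa [Nat.ModEq, Nat.add_mul_mod_self_left] using congrArg (· % n) h
  obtain rfl : u = u' := by simpa [Nat.ModEq, Nat.mod_eq_of_lt hu, Nat.mod_eq_of_lt hu'] using hmod
  exact ⟨rfl, Nat.eq_of_mul_eq_mul_left (Nat.zero_lt_of_lt hu) (Nat.add_left_cancel h)⟩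

section Exchange

variable {K L : ℕ}

def residues (n L : ℕ) (a : Fin K → ℕ) (i : Fin K) : ℕ :=
  if (i : ℕ) < L then a i % n else a i

def quotients (n : ℕ) (hLK : L ≤ K) (a : Fin K → ℕ) (j : Fin L) : ℕ :=
  a (Fin.castLE hLK j) / n

def extendByZero (K : ℕ) (b : Fin L → ℕ) (i : Fin K) : ℕ :=
  if h : (i : ℕ) < L then b ⟨i, h⟩ else 0

def exchange (n y : ℕ) (hLK : L ≤ K) (q : (Fin K → ℕ) × (Fin L → ℕ)) :
    (Fin K → ℕ) × (Fin L → ℕ) :=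
  (fun i => residues n L q.1 i + n * extendByZero K q.2 i +
      if (i : ℕ) = 0 then (y - 1) * ∑ j, residues n L q.1 j else 0,
    quotients n hLK q.1)

variable {n : ℕ} (hLK : L ≤ K)

lemma residues_lt (hn : 0 < n) (a : Fin K → ℕ) {i : Fin K} (hi : (i : ℕ) < L) :
    residues n L a i < n := by
  simpa [residues, hi] using Nat.mod_lt _ hn

lemma extendByZero_of_le (b : Fin L → ℕ) {i : Fin K} (hi : L ≤ (i : ℕ)) :
    extendByZero K b i = 0 :=
  dif_neg (not_lt.mpr hi)

lemma extendByZero_castLE (b : Fin L → ℕ) (j : Fin L) :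
    extendByZero K b (Fin.castLE hLK j) = b j := by
  simp [extendByZero]

lemma extendByZero_injective (hLK : L ≤ K) : Function.Injective (extendByZero (L := L) K) :=
  fun b b' h => funext fun j => by
    simpa [extendByZero_castLE hLK] using congrFun h (Fin.castLE hLK j)

lemma residues_add_mul_extendByZero_quotients (a : Fin K → ℕ) (i : Fin K) :
    residues n L a i + n * extendByZero K (quotients n hLK a) i = a i := by
  by_cases hi : (i : ℕ) < L
  · simpa [residues, extendByZero, quotients, hi] using Nat.mod_add_div (a i) n
  · simp [residues, extendByZero, hi]

lemma sum_mul_extendByZero (g : Fin K → ℕ) (b : Fin L → ℕ) :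
    ∑ i, g i * extendByZero K b i = ∑ j, g (Fin.castLE hLK j) * b j := by
  obtain ⟨m, rfl⟩ := Nat.exists_eq_add_of_le hLK
  simp only [extendByZero, mul_dite, mul_zero, Fin.sum_univ_add, Fin.val_castAdd, Fin.is_lt,
    ↓reduceDIte, Fin.eta, Fin.val_natAdd, add_lt_iff_neg_left, not_lt_zero, sum_const_zero,
    add_zero]
  rfl

lemma sum_eq_sum_residues_add_mul_sum_quotients (a : Fin K → ℕ) :
    ∑ i, a i = ∑ i, residues n L a i + n * ∑ j, quotients n hLK a j := by
  calc ∑ i, a i = ∑ i, (residues n L a i + n * extendByZero K (quotients n hLK a) i) := by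
        simp only [residues_add_mul_extendByZero_quotients]
    _ = _ := by
      simpa [sum_add_distrib, mul_sum] using
        sum_mul_extendByZero hLK (fun _ => n) (quotients n hLK a)

lemma weight_eq_weight_residues_add_mul_weight_quotients (a : Fin K → ℕ) :
    weight a = weight (residues n L a) + n * weight (quotients n hLK a) := by
  calc weight a
        = ∑ i : Fin K, (i : ℕ) * (residues n L a i + n * extendByZero K (quotients n hLK a) i) := by
        simp only [weight, residues_add_mul_extendByZero_quotients]
    _ = _ := by
      simpa [weight, mul_add, sum_add_distrib, mul_sum, mul_left_comm, mul_assoc] using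
        sum_mul_extendByZero hLK (fun i => n * i) (quotients n hLK a)

variable (n) in
lemma sum_exchange {y : ℕ} (hy : 0 < y) (q : (Fin K → ℕ) × (Fin L → ℕ)) :
    ∑ i, (exchange n y hLK q).1 i + n * y * ∑ j, (exchange n y hLK q).2 j
      = y * ∑ i, q.1 i + n * ∑ j, q.2 j := by
  have hslot : ∑ i : Fin K, (if (i : ℕ) = 0 then (y - 1) * ∑ j, residues n L q.1 j else 0)
      = (y - 1) * ∑ j, residues n L q.1 j := by
    cases K <;> simp [Fin.sum_univ_succ]
  have hb := sum_mul_extendByZero hLK (fun _ => 1) q.2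
  obtain ⟨y, rfl⟩ := Nat.exists_eq_add_of_lt hy
  simp only [one_mul] at hb
  rw [sum_eq_sum_residues_add_mul_sum_quotients hLK q.1]
  simp only [exchange, sum_add_distrib, ← mul_sum, hslot, hb]
  simp only [zero_add, Nat.add_sub_cancel]
  ring

variable (n) in
lemma weight_exchange (y : ℕ) (q : (Fin K → ℕ) × (Fin L → ℕ)) :
    weight (exchange n y hLK q).1 + n * weight (exchange n y hLK q).2
      = weight q.1 + n * weight q.2 := by
  have hslot : ∀ i : Fin K,
      (i : ℕ) * (if (i : ℕ) = 0 then (y - 1) * ∑ j, residues n L q.1 j else 0) = 0 := by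
    intro i
    split_ifs with hi <;> simp [hi]
  have hb := sum_mul_extendByZero hLK (fun i => (i : ℕ)) q.2
  simp only [Fin.val_castLE] at hb
  rw [weight_eq_weight_residues_add_mul_weight_quotients (n := n) hLK q.1]
  simp only [exchange, weight, mul_add, sum_add_distrib, hslot, ← mul_sum, mul_left_comm _ n, hb,
    add_zero]
  ring

lemma residues_eq_and_extendByZero_eq (hn : 0 < n) {m : ℕ} (hm : 0 < m) (hco : n.Coprime m)
    {a a' : Fin K → ℕ} {b b' : Fin L → ℕ} {i : Fin K}
    (h : m * residues n L a i + n * extendByZero K b i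
      = m * residues n L a' i + n * extendByZero K b' i) :
    residues n L a i = residues n L a' i ∧ extendByZero K b i = extendByZero K b' i := by
  by_cases hi : (i : ℕ) < L
  · exact eq_and_eq_of_mul_add_mul_eq hco (residues_lt hn a hi) (residues_lt hn a' hi) h
  · rw [extendByZero_of_le b (not_lt.mp hi), extendByZero_of_le b' (not_lt.mp hi)] at h ⊢
    simpa [hm.ne'] using h

lemma exchange_injective (hn : 0 < n) {y : ℕ} (hy : 0 < y) (hco : n.Coprime y) :
    Function.Injective (exchange n y hLK) := by
  rintro ⟨a, b⟩ ⟨a', b'⟩ h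
  simp only [exchange, Prod.mk.injEq] at h
  obtain ⟨hc, hd⟩ := h
  have off_zero : ∀ i : Fin K, (i : ℕ) ≠ 0 →
      residues n L a i = residues n L a' i ∧ extendByZero K b i = extendByZero K b' i := by
    intro i hi
    refine residues_eq_and_extendByZero_eq hn one_pos (Nat.coprime_one_right n) ?_
    simpa [hi] using congrFun hc i
  -- once the other slots agree, slot `0` reads `y * residue + n * b` modulo a common term
  have at_zero : ∀ i : Fin K, (i : ℕ) = 0 →
      residues n L a i = residues n L a' i ∧ extendByZero K b i = extendByZero K b' i := by
    intro i hi
    have hrest : ∑ j ∈ univ.erase i, residues n L a j = ∑ j ∈ univ.erase i, residues n L a' j :=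
      sum_congr rfl fun j hj =>
        (off_zero j fun hj0 => (mem_erase.mp hj).1 (Fin.ext (hj0.trans hi.symm))).1
    have hci := congrFun hc i
    simp only [hi, if_true, ← add_sum_erase univ _ (mem_univ i), hrest] at hci
    obtain ⟨y, rfl⟩ := Nat.exists_eq_add_of_lt hy
    refine residues_eq_and_extendByZero_eq hn hy hco ?_
    simp only [zero_add, Nat.add_sub_cancel] at hci ⊢
    linarith
  have hr : residues n L a = residues n L a' := funext fun i =>
    if hi : (i : ℕ) = 0 then (at_zero i hi).1 else (off_zero i hi).1
  have he : extendByZero K b = extendByZero K b' := funext fun i =>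
    if hi : (i : ℕ) = 0 then (at_zero i hi).2 else (off_zero i hi).2
  refine Prod.ext (funext fun i => ?_) (extendByZero_injective hLK he)
  dsimp only
  rw [← residues_add_mul_extendByZero_quotients hLK a,
    ← residues_add_mul_extendByZero_quotients hLK a', hr, hd]

end Exchange

theorem refinement_main (n y K L f : ℕ) (hn : 0 < n) (hy : 0 < y)
    (hco : Nat.Coprime n y) (hKL : L ≤ K) (x : ℕ) :
    0 ≤ ((∑ p ∈ (Finset.range (f + 1) ×ˢ Finset.range (f + 1)).filter
            (fun p => p.1 + n * y * p.2 = f),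
          gbS K p.1 * (gbS L p.2).comp (Polynomial.X ^ n))
        - ∑ p ∈ (Finset.range (f + 1) ×ˢ Finset.range (f + 1)).filter
            (fun p => p.1 * y + n * p.2 = f),
          gbS K p.1 * (gbS L p.2).comp (Polynomial.X ^ n)).coeff x := by
  rw [sum_gbS_mul_gbS_comp_X_pow, sum_gbS_mul_gbS_comp_X_pow]
  refine coeff_sum_X_pow_sub_sum_X_pow_nonneg (exchange n y hKL) ?_
    (exchange_injective hKL hn hy hco).injOn (fun q _ => weight_exchange n hKL y q) x
  intro q hq
  have hsum := sum_exchange n hKL hy q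
  have hle : ∑ j, (exchange n y hKL q).2 j ≤ n * y * ∑ j, (exchange n y hKL q).2 j :=
    Nat.le_mul_of_pos_left _ (Nat.mul_pos hn hy)
  simp only [mem_coe, mem_pairsOver, mem_filter, mem_product, mem_range] at hq ⊢
  obtain ⟨-, hf⟩ := hq
  rw [mul_comm] at hf
  omega
end

section
/- For any positive integers K, m, y, z, every coefficient in the power series expansion of 1/((q^z; q^m)_K) − 1/((q^{yz}; q^m)_K) is nonnegative. -/
open Finset PowerSeries

/-!
Write `a_j = 1 - q^(z+jm)`, `b_j = 1 - q^(yz+jm)` and `D_K = 1/(q^z;q^m)_K - 1/(q^(yz);q^m)_K`.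
Then `D_(K+1) = D_K / b_K + (1/a_K - 1/b_K) / (q^z;q^m)_K`, and since
`b_K - a_K = q^(z+Km) (1 - q^((y-1)z)) = q^(z+Km) (1 - q^z) (1 + q^z + ⋯ + q^((y-2)z))`,
the factor `1 - q^z` cancels the first factor of `(q^z;q^m)_(K+1)`. Every remaining factor is a
power of `q`, a geometric sum or some `1/(1 - q^e)` with `e > 0`, all of which have nonnegative
coefficients, so `D_K` has nonnegative coefficients by induction on `K`.
-/

namespace PowerSeries

section Nonneg

variable (R : Type*) [Semiring R] [PartialOrder R] [IsOrderedRing R]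

def nonnegSeries : Subsemiring R⟦X⟧ where
  carrier := {f | ∀ n, 0 ≤ coeff n f}
  mul_mem' {f g} hf hg n := by
    rw [coeff_mul]
    exact sum_nonneg fun p _ => mul_nonneg (hf _) (hg _)
  one_mem' n := by
    rw [coeff_one]
    split_ifs <;> norm_num
  add_mem' {f g} hf hg n := by
    rw [map_add]
    exact add_nonneg (hf n) (hg n)
  zero_mem' n := by simp

variable {R}

theorem mem_nonnegSeries {f : R⟦X⟧} : f ∈ nonnegSeries R ↔ ∀ n, 0 ≤ coeff n f := Iff.rfl

theorem X_mem_nonnegSeries : (X : R⟦X⟧) ∈ nonnegSeries R := fun n => by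
  rw [coeff_X]
  split_ifs <;> norm_num

end Nonneg

section Field

variable {𝕜 : Type*} [Field 𝕜] [PartialOrder 𝕜] [IsOrderedRing 𝕜]

/-- Writing `u = (1 - f)⁻¹`, the relation `u = 1 + f u` determines `coeff n u` from lower
coefficients of `u` because `f` has no constant term. -/
theorem inv_one_sub_mem_nonnegSeries {f : 𝕜⟦X⟧} (hf : f ∈ nonnegSeries 𝕜)
    (hf₀ : constantCoeff f = 0) : (1 - f)⁻¹ ∈ nonnegSeries 𝕜 := by
  set u := (1 - f)⁻¹
  have hu : u = 1 + f * u := by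
    have : (1 - f) * u = 1 := PowerSeries.mul_inv_cancel _ (by simp [hf₀])
    linear_combination this
  intro n
  induction n using Nat.strong_induction_on with
  | _ n ih =>
    rw [hu, map_add, coeff_mul]
    refine add_nonneg ((nonnegSeries 𝕜).one_mem n) (sum_nonneg fun p hp => ?_)
    rcases Nat.eq_zero_or_pos p.1 with h | h
    · simp [h, hf₀]
    · have : p.2 < n := by rw [HasAntidiagonal.mem_antidiagonal] at hp; omega
      exact mul_nonneg (hf _) (ih _ this)

theorem inv_one_sub_X_pow_mem_nonnegSeries {e : ℕ} (he : 0 < e) :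
    (1 - X ^ e : 𝕜⟦X⟧)⁻¹ ∈ nonnegSeries 𝕜 :=
  inv_one_sub_mem_nonnegSeries (pow_mem X_mem_nonnegSeries e) (by simp [he.ne'])

theorem mul_inv_cancel_one_sub_X_pow {e : ℕ} (he : 0 < e) :
    (1 - X ^ e : 𝕜⟦X⟧) * (1 - X ^ e)⁻¹ = 1 :=
  PowerSeries.mul_inv_cancel _ (by simp [he.ne'])

theorem inv_one_sub_X_pow_sub_inv_one_sub_X_pow {c : ℕ} (hc : 0 < c) (z k : ℕ) :
    (1 - X ^ c : 𝕜⟦X⟧)⁻¹ - (1 - X ^ (c + z * k))⁻¹ =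
      (1 - X ^ z) * (X ^ c * (∑ i ∈ range k, (X ^ z) ^ i) *
        ((1 - X ^ c)⁻¹ * (1 - X ^ (c + z * k))⁻¹)) := by
  have ha := mul_inv_cancel_one_sub_X_pow (𝕜 := 𝕜) hc
  have hb := mul_inv_cancel_one_sub_X_pow (𝕜 := 𝕜) (e := c + z * k) (by omega)
  have hgeom := geom_sum_mul (X ^ z : 𝕜⟦X⟧) k
  rw [pow_add, pow_mul] at hb ⊢
  linear_combination ((1 - X ^ c)⁻¹ * (1 - X ^ c * (X ^ z) ^ k)⁻¹ * X ^ c) * hgeom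
    - (1 - X ^ c)⁻¹ * hb + (1 - X ^ c * (X ^ z) ^ k)⁻¹ * ha

end Field

end PowerSeries

open PowerSeries

theorem qp_succ (c m K : ℕ) : qp c m (K + 1) = qp c m K * (1 - X ^ (c + K * m)) :=
  prod_range_succ _ _

theorem qp_succ' (c m K : ℕ) : qp c m (K + 1) = (1 - X ^ c) * qp (c + m) m K := by
  rw [qp, prod_range_succ', zero_mul, add_zero, mul_comm]
  congr 1
  exact prod_congr rfl fun j _ => by ring_nf

theorem inv_qp_mem_nonnegSeries {c : ℕ} (hc : 0 < c) (m K : ℕ) :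
    (qp c m K)⁻¹ ∈ nonnegSeries ℚ := by
  induction K with
  | zero => simp [qp, (nonnegSeries ℚ).one_mem]
  | succ K ih =>
    rw [qp_succ, PowerSeries.mul_inv_rev]
    exact mul_mem (inv_one_sub_X_pow_mem_nonnegSeries (by omega)) ih

theorem one_sub_X_pow_mul_inv_qp_succ {c : ℕ} (hc : 0 < c) (m K : ℕ) :
    (1 - X ^ c) * (qp c m (K + 1))⁻¹ = (qp (c + m) m K)⁻¹ := by
  rw [qp_succ', PowerSeries.mul_inv_rev, mul_left_comm, mul_inv_cancel_one_sub_X_pow hc, mul_one]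

theorem inv_qp_sub_inv_qp_mem_nonnegSeries {y z : ℕ} (hy : 0 < y) (hz : 0 < z) (m K : ℕ) :
    (qp z m K)⁻¹ - (qp (y * z) m K)⁻¹ ∈ nonnegSeries ℚ := by
  induction K with
  | zero => simp [qp]
  | succ K ih =>
    set c := z + K * m
    have hd : y * z + K * m = c + z * (y - 1) := by
      obtain ⟨y, rfl⟩ := Nat.exists_eq_add_one_of_ne_zero hy.ne'
      simp only [c, Nat.add_sub_cancel]; ring
    set b : ℚ⟦X⟧ := (1 - X ^ (y * z + K * m))⁻¹
    have hstep : (qp z m (K + 1))⁻¹ - (qp (y * z) m (K + 1))⁻¹ =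
        ((qp z m K)⁻¹ - (qp (y * z) m K)⁻¹) * b +
          (qp z m K)⁻¹ * ((1 - X ^ c)⁻¹ - b) := by
      rw [qp_succ, qp_succ, PowerSeries.mul_inv_rev, PowerSeries.mul_inv_rev]
      ring
    have hgap : (qp z m K)⁻¹ * ((1 - X ^ c)⁻¹ - b) =
        (qp (z + m) m K)⁻¹ * (X ^ c * (∑ i ∈ range (y - 1), (X ^ z) ^ i) * b) := by
      rw [show b = (1 - X ^ (c + z * (y - 1)))⁻¹ by rw [← hd],
        inv_one_sub_X_pow_sub_inv_one_sub_X_pow (by omega), ← one_sub_X_pow_mul_inv_qp_succ hz,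
        qp_succ, PowerSeries.mul_inv_rev]
      ring
    have hb : b ∈ nonnegSeries ℚ := inv_one_sub_X_pow_mem_nonnegSeries (by positivity)
    have hX : (X : ℚ⟦X⟧) ∈ nonnegSeries ℚ := X_mem_nonnegSeries
    rw [hstep, hgap]
    exact add_mem (mul_mem ih hb) (mul_mem (inv_qp_mem_nonnegSeries (by omega) m K)
      (mul_mem (mul_mem (pow_mem hX c) (sum_mem fun i _ => pow_mem (pow_mem hX z) i)) hb))

theorem L_eq_zero_case_general (K m y z : ℕ) (hy : 0 < y) (hz : 0 < z)
    (x : ℕ) :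
    0 ≤ PowerSeries.coeff x ((qp z m K)⁻¹ - (qp (y * z) m K)⁻¹) :=
  mem_nonnegSeries.1 (inv_qp_sub_inv_qp_mem_nonnegSeries hy hz m K) x

theorem L_eq_zero_case (K m y z : ℕ) (hK : 0 < K) (hm : 0 < m) (hy : 0 < y) (hz : 0 < z)
    (x : ℕ) :
    0 ≤ PowerSeries.coeff x ((qp z m K)⁻¹ - (qp (y * z) m K)⁻¹) :=
  L_eq_zero_case_general K m y z hy hz x
end

section
/- For any positive integers K, m, n, z, every coefficient in the power series expansion of 1/((q^z; q^m)_K) − 1/((q^{nz}; q^{nm})_K) is nonnegative. -/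
open Finset PowerSeries

/-!
Since `1 - q^(na) = (1 - q^a)(1 + q^a + ⋯ + q^((n-1)a))`, we get
`(q^(nz); q^(nm))_K = (q^z; q^m)_K * G` with `G` a product of such geometric sums, hence
`1/(q^z; q^m)_K - 1/(q^(nz); q^(nm))_K = (1/(q^(nz); q^(nm))_K) * (G - 1)`.
Both factors have nonnegative coefficients: the first is a product of the series
`1/(1 - q^b) = ∑ q^(bk)`, and `G` has nonnegative coefficients and constant term `1`.
-/

namespace PowerSeries

section OrderedSemiring

variable {R : Type*} [CommSemiring R] [PartialOrder R] [IsOrderedRing R]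

variable (R) in
def nonnegCoeffs : Subsemiring R⟦X⟧ where
  carrier := {f | ∀ n, 0 ≤ coeff n f}
  mul_mem' {f g} hf hg n := by
    rw [coeff_mul]
    exact sum_nonneg fun p _ => mul_nonneg (hf p.1) (hg p.2)
  one_mem' n := by
    rw [coeff_one]
    split_ifs <;> simp
  add_mem' {f g} hf hg n := by
    rw [map_add]
    exact add_nonneg (hf n) (hg n)
  zero_mem' n := by simp

theorem X_mem_nonnegCoeffs : (X : R⟦X⟧) ∈ nonnegCoeffs R := fun n => by
  rw [coeff_X]
  split_ifs <;> simp

theorem mk_one_mem_nonnegCoeffs : (mk 1 : R⟦X⟧) ∈ nonnegCoeffs R := fun n => by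
  simp

end OrderedSemiring

section OrderedRing

variable {R : Type*} [CommRing R] [PartialOrder R] [IsOrderedRing R]

theorem expand_mem_nonnegCoeffs {f : R⟦X⟧} (hf : f ∈ nonnegCoeffs R) (p : ℕ) (hp : p ≠ 0) :
    expand p hp f ∈ nonnegCoeffs R := fun n => by
  rw [coeff_expand]
  split_ifs
  exacts [hf _, le_rfl]

theorem sub_one_mem_nonnegCoeffs {f : R⟦X⟧} (hf : f ∈ nonnegCoeffs R)
    (h : constantCoeff f = 1) : f - 1 ∈ nonnegCoeffs R := fun n => by
  rw [map_sub, coeff_one]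
  split_ifs with hn
  · simp [hn, h]
  · simpa using hf n

end OrderedRing

section Field

variable {k : Type*} [Field k]

theorem inv_prod {ι : Type*} (s : Finset ι) (f : ι → k⟦X⟧) :
    (∏ i ∈ s, f i)⁻¹ = ∏ i ∈ s, (f i)⁻¹ := by
  classical
  induction s using Finset.induction_on with
  | empty => simp
  | insert a s ha ih => rw [prod_insert ha, prod_insert ha, PowerSeries.mul_inv_rev, ih, mul_comm]

theorem inv_one_sub_X_pow {a : ℕ} (ha : a ≠ 0) : (1 - X ^ a : k⟦X⟧)⁻¹ = expand a ha (mk 1) := by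
  rw [inv_eq_iff_mul_eq_one (by simp [ha])]
  simpa using congrArg (expand a ha) (mk_one_mul_one_sub_eq_one (S := k))

theorem inv_sub_inv_eq_inv_mul_sub_one {A B G : k⟦X⟧} (hB : B = A * G)
    (hG : constantCoeff G ≠ 0) : A⁻¹ - B⁻¹ = B⁻¹ * (G - 1) := by
  rw [mul_sub, mul_one, hB, mul_comm A, PowerSeries.mul_inv_rev, mul_assoc,
    PowerSeries.inv_mul_cancel _ hG, mul_one]

end Field

end PowerSeries

theorem qp_inv_mem_nonnegCoeffs {c : ℕ} (hc : 0 < c) (m L : ℕ) :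
    (qp c m L)⁻¹ ∈ nonnegCoeffs ℚ := by
  rw [qp, inv_prod]
  refine prod_mem fun j _ => ?_
  rw [inv_one_sub_X_pow (by positivity)]
  exact expand_mem_nonnegCoeffs mk_one_mem_nonnegCoeffs _ _

theorem qp_mul_mul (n c m L : ℕ) :
    qp (n * c) (n * m) L = qp c m L * ∏ j ∈ range L, ∑ i ∈ range n, (X ^ (c + j * m)) ^ i := by
  rw [qp, qp, ← prod_mul_distrib]
  refine prod_congr rfl fun j _ => ?_
  rw [mul_neg_geom_sum, ← pow_mul]
  ring_nf

theorem dual_L_eq_zero_case_general (K m n z : ℕ) (hn : 0 < n) (hz : 0 < z)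
    (x : ℕ) :
    0 ≤ PowerSeries.coeff x ((qp z m K)⁻¹ - (qp (n * z) (n * m) K)⁻¹) := by
  set G : ℚ⟦X⟧ := ∏ j ∈ range K, ∑ i ∈ range n, (X ^ (z + j * m)) ^ i
  have hG_mem : G ∈ nonnegCoeffs ℚ :=
    prod_mem fun _ _ => sum_mem fun _ _ => pow_mem (pow_mem X_mem_nonnegCoeffs _) _
  have hG_const : constantCoeff G = 1 := by
    simp [G, map_prod, zero_geom_sum, hz.ne', hn.ne']
  rw [inv_sub_inv_eq_inv_mul_sub_one (qp_mul_mul n z m K)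
    (by rw [hG_const]; exact one_ne_zero)]
  exact mul_mem (qp_inv_mem_nonnegCoeffs (by positivity) _ _)
    (sub_one_mem_nonnegCoeffs hG_mem hG_const) x

theorem dual_L_eq_zero_case (K m n z : ℕ) (hK : 0 < K) (hm : 0 < m) (hn : 0 < n) (hz : 0 < z)
    (x : ℕ) :
    0 ≤ PowerSeries.coeff x ((qp z m K)⁻¹ - (qp (n * z) (n * m) K)⁻¹) :=
  dual_L_eq_zero_case_general K m n z hn hz x
end

section
/- Let y > 1, n > 1 be coprime positive integers and let K ≥ L ≥ 1, m, z be positive integers. For 1 ≤ i ≤ K write z_i = z+(i−1)m and (yz)_i = yz+(i−1)m, and for 1 ≤ i ≤ L write (nz)_i = nz+(i−1)nm and (nyz)_i = nyz+(i−1)nm. Then the map φ sending a partition π2 with parts among {yz+(i−1)m : 1≤i≤K} ∪ {nz+(i−1)nm : 1≤i≤L} to the partition π1 with parts among {z+(i−1)m : 1≤i≤K} ∪ {nyz+(i−1)nm : 1≤i≤L}, defined by ν((nyz)_i, π1) = Q((yz)_i, π2) for 1≤i≤L; ν(z_i, π1) = ν((yz)_i, π2) for L<i≤K; ν(z_i,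 π1) = n·ν((nz)_i, π2) + R((yz)_i, π2) for 1<i≤L; and ν(z_1, π1) = n·ν((nz)_1, π2) + y·R((yz)_1, π2) + (y−1)·(A+B), where A = Σ_{1<j≤L} R((yz)_j, π2) and B = Σ_{L<j≤K} ν((yz)_j, π2), is injective and norm-preserving (|φ(π2)| = |π2|). -/
open Finset

lemma sum_extend {M : Type*} [AddCommMonoid M] {K L : ℕ} (hLK : L ≤ K) (g : Fin L → M) :
    ∑ i : Fin L, g i = ∑ i : Fin K, if h : i.val < L then g ⟨i.val, h⟩ else 0 := by
  set f : ℕ → M := fun j => if h : j < L then g ⟨j, h⟩ else 0 with hf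
  calc ∑ i : Fin L, g i = ∑ i : Fin L, f i.val := by
        refine Finset.sum_congr rfl fun i _ => ?_
        simp [hf, dif_pos i.isLt]
    _ = ∑ i ∈ range L, f i := Fin.sum_univ_eq_sum_range f L
    _ = ∑ i ∈ range K, f i := Finset.sum_subset (Finset.range_subset_range.mpr hLK)
        (fun x _ hx => dif_neg (by simpa using hx))
    _ = ∑ i : Fin K, f i.val := (Fin.sum_univ_eq_sum_range f K).symm
    _ = ∑ i : Fin K, if h : i.val < L then g ⟨i.val, h⟩ else 0 := rfl


/-- The injection of the main theorem (case `L > 0`). A partition `π` into the colored parts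
`(yz)_i = yz+(i-1)m` (`1 ≤ i ≤ K`, multiplicities `π.1`, zero-indexed) and
`(nz)_i = nz+(i-1)nm` (`1 ≤ i ≤ L`, multiplicities `π.2`) is sent to a partition into the
colored parts `z_i = z+(i-1)m` (`1 ≤ i ≤ K`) and `(nyz)_i = nyz+(i-1)nm` (`1 ≤ i ≤ L`). -/
def phi (n y K L : ℕ) (hL : 0 < L) (hLK : L ≤ K) :
    (Fin K → ℕ) × (Fin L → ℕ) → (Fin K → ℕ) × (Fin L → ℕ) :=
  fun π =>
    ⟨fun i =>
      if i.val = 0 then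
        n * π.2 ⟨0, hL⟩ + y * (π.1 i % n) + (y - 1) *
          ((∑ j : Fin L, if j.val = 0 then 0 else π.1 (Fin.castLE hLK j) % n) +
           (∑ j : Fin K, if L ≤ j.val then π.1 j else 0))
      else if h : i.val < L then n * π.2 ⟨i.val, h⟩ + π.1 i % n
      else π.1 i,
    fun i => π.1 (Fin.castLE hLK i) / n⟩

theorem phi_injective_norm_preserving (n y K L m z : ℕ) (hn : 1 < n) (hy : 1 < y)
    (hco : Nat.Coprime n y) (hL : 0 < L) (hLK : L ≤ K) (hm : 0 < m) (hz : 0 < z) :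
    Function.Injective (phi n y K L hL hLK) ∧
    ∀ π : (Fin K → ℕ) × (Fin L → ℕ),
      ((∑ i, (phi n y K L hL hLK π).1 i * (z + i.val * m)) +
        ∑ i, (phi n y K L hL hLK π).2 i * (n * y * z + i.val * (n * m)))
      = (∑ i, π.1 i * (y * z + i.val * m)) +
          ∑ i, π.2 i * (n * z + i.val * (n * m)) := by
  have hK0 : 0 < K := lt_of_lt_of_le hL hLK
  have hn0 : 0 < n := by omega
  constructor
  · -- Injectivity
    intro π σ h
    have h1 : ∀ i : Fin K, (phi n y K L hL hLK π).1 i = (phi n y K L hL hLK σ).1 i :=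
      fun i => congrFun (congrArg Prod.fst h) i
    have h2 : ∀ i : Fin L, π.1 (Fin.castLE hLK i) / n = σ.1 (Fin.castLE hLK i) / n :=
      fun i => congrFun (congrArg Prod.snd h) i
    simp only [phi] at h1
    -- tail parts
    have htail : ∀ i : Fin K, L ≤ i.val → π.1 i = σ.1 i := by
      intro i hi
      have := h1 i
      rw [if_neg (by omega), dif_neg (by omega), if_neg (by omega), dif_neg (by omega)] at this
      exact this
    -- middle parts: mod and second component
    have hmid : ∀ i : Fin K, i.val ≠ 0 → ∀ hi : i.val < L,
        π.1 i % n = σ.1 i % n ∧ π.2 ⟨i.val, hi⟩ = σ.2 ⟨i.val, hi⟩ := by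
      intro i h0 hi
      have := h1 i
      rw [if_neg h0, dif_pos hi, if_neg h0, dif_pos hi] at this
      have hp : π.1 i % n < n := Nat.mod_lt _ hn0
      have hs : σ.1 i % n < n := Nat.mod_lt _ hn0
      have e1 : π.1 i % n = σ.1 i % n := by
        have h' := congrArg (· % n) this
        simpa [Nat.mul_add_mod, Nat.mod_eq_of_lt hp, Nat.mod_eq_of_lt hs] using h'
      refine ⟨e1, ?_⟩
      rw [e1] at this
      exact Nat.eq_of_mul_eq_mul_left hn0 (Nat.add_right_cancel this)
    have hdiv : ∀ i : Fin K, i.val < L → π.1 i / n = σ.1 i / n := by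
      intro i hi
      have := h2 ⟨i.val, hi⟩
      have hc : Fin.castLE hLK (⟨i.val, hi⟩ : Fin L) = i := by
        apply Fin.ext; rfl
      rwa [hc] at this
    have hmid1 : ∀ i : Fin K, i.val ≠ 0 → i.val < L → π.1 i = σ.1 i := by
      intro i h0 hi
      rw [← Nat.div_add_mod (π.1 i) n, ← Nat.div_add_mod (σ.1 i) n,
        (hmid i h0 hi).1, hdiv i hi]
    -- A and B equal
    have hA : (∑ j : Fin L, if j.val = 0 then 0 else π.1 (Fin.castLE hLK j) % n)
        = ∑ j : Fin L, if j.val = 0 then 0 else σ.1 (Fin.castLE hLK j) % n := by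
      refine Finset.sum_congr rfl fun j _ => ?_
      by_cases h0 : j.val = 0
      · simp [h0]
      · rw [if_neg h0, if_neg h0,
          (hmid (Fin.castLE hLK j) h0 (by simpa using j.isLt)).1]
    have hB : (∑ j : Fin K, if L ≤ j.val then π.1 j else 0)
        = ∑ j : Fin K, if L ≤ j.val then σ.1 j else 0 := by
      refine Finset.sum_congr rfl fun j _ => ?_
      by_cases h0 : L ≤ j.val
      · rw [if_pos h0, if_pos h0, htail j h0]
      · simp [h0]
    -- index 0
    have h0 := h1 ⟨0, hK0⟩
    rw [if_pos rfl, if_pos rfl, hA, hB] at h0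
    have hp : π.1 ⟨0, hK0⟩ % n < n := Nat.mod_lt _ hn0
    have hs : σ.1 ⟨0, hK0⟩ % n < n := Nat.mod_lt _ hn0
    have heq : n * π.2 ⟨0, hL⟩ + y * (π.1 ⟨0, hK0⟩ % n)
        = n * σ.2 ⟨0, hL⟩ + y * (σ.1 ⟨0, hK0⟩ % n) := Nat.add_right_cancel h0
    have hmm : (n * π.2 ⟨0, hL⟩ + y * (π.1 ⟨0, hK0⟩ % n)) % n
        = (n * σ.2 ⟨0, hL⟩ + y * (σ.1 ⟨0, hK0⟩ % n)) % n := by rw [heq]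
    rw [Nat.mul_add_mod, Nat.mul_add_mod] at hmm
    have hmod0 : π.1 ⟨0, hK0⟩ % n = σ.1 ⟨0, hK0⟩ % n := by
      have := Nat.ModEq.cancel_left_of_coprime (c := y) (by exact hco) hmm
      rwa [Nat.ModEq, Nat.mod_eq_of_lt hp, Nat.mod_eq_of_lt hs] at this
    have hsec0 : π.2 ⟨0, hL⟩ = σ.2 ⟨0, hL⟩ := by
      rw [hmod0] at heq
      have := Nat.add_right_cancel heq
      exact Nat.eq_of_mul_eq_mul_left hn0 this
    have hfst0 : π.1 ⟨0, hK0⟩ = σ.1 ⟨0, hK0⟩ := by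
      rw [← Nat.div_add_mod (π.1 ⟨0, hK0⟩) n, ← Nat.div_add_mod (σ.1 ⟨0, hK0⟩) n,
        hmod0, hdiv ⟨0, hK0⟩ hL]
    -- conclude
    ext i
    · by_cases hi0 : i.val = 0
      · have : i = ⟨0, hK0⟩ := Fin.ext hi0
        rw [this]; exact hfst0
      · by_cases hi : i.val < L
        · exact hmid1 i hi0 hi
        · exact htail i (by omega)
    · by_cases hi0 : i.val = 0
      · have : i = ⟨0, hL⟩ := Fin.ext hi0
        rw [this]; exact hsec0
      · have hi : i.val < L := i.isLt
        have := (hmid ⟨i.val, lt_of_lt_of_le hi hLK⟩ hi0 hi).2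
        simpa using this
  · -- Norm preservation
    intro π
    obtain ⟨y', rfl⟩ : ∃ y', y = y' + 1 := ⟨y - 1, by omega⟩
    simp only [phi, Nat.add_sub_cancel]
    set A := ∑ j : Fin L, if j.val = 0 then 0 else π.1 (Fin.castLE hLK j) % n with hA
    set B := ∑ j : Fin K, if L ≤ j.val then π.1 j else 0 with hB
    set z0 : Fin K := ⟨0, hK0⟩ with hz0
    set c : Fin K → ℕ := fun i => if i.val < L then π.1 i % n else π.1 i with hc
    set E := (univ : Finset (Fin K)).erase z0 with hE
    -- A + B = sum of c over E
    have hAB : A + B = ∑ i ∈ E, c i := by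
      rw [hA, hB,
        sum_extend hLK (g := fun j => if j.val = 0 then 0 else π.1 (Fin.castLE hLK j) % n),
        ← Finset.sum_add_distrib,
        ← Finset.add_sum_erase _ _ (Finset.mem_univ z0)]
      have hz0t : ((if h : (z0:Fin K).val < L then
            (if (z0:Fin K).val = 0 then 0 else π.1 (Fin.castLE hLK ⟨(z0:Fin K).val, h⟩) % n) else 0)
          + (if L ≤ (z0:Fin K).val then π.1 z0 else 0)) = 0 := by
        rw [dif_pos (by simpa [hz0] using hL)]
        simp [hz0]
        omega
      rw [hz0t, zero_add]
      refine Finset.sum_congr rfl fun i hi => ?_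
      have hi0 : i.val ≠ 0 := by
        intro hv
        exact (Finset.mem_erase.mp hi).1 (Fin.ext hv)
      by_cases hiL : i.val < L
      · rw [dif_pos hiL, if_neg hi0, if_neg (by omega)]
        have hcl : Fin.castLE hLK (⟨i.val, hiL⟩ : Fin L) = i := Fin.ext rfl
        simp only [hc]
        rw [hcl, if_pos hiL, add_zero]
      · rw [dif_neg hiL, if_pos (by omega)]
        simp only [hc]
        rw [if_neg hiL, zero_add]
    -- rewrite the Fin L sums as Fin K sums
    rw [sum_extend hLK (g := fun i => π.1 (Fin.castLE hLK i) / n * (n * (y'+1) * z + i.val * (n * m))),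
        sum_extend hLK (g := fun i => π.2 i * (n * z + i.val * (n * m))),
        ← Finset.sum_add_distrib, ← Finset.sum_add_distrib,
        ← Finset.add_sum_erase _ _ (Finset.mem_univ z0),
        ← Finset.add_sum_erase _ _ (Finset.mem_univ z0)]
    -- pointwise identity off 0
    have hpt : ∀ i ∈ E,
        ((if i.val = 0 then
            n * π.2 ⟨0, hL⟩ + (y'+1) * (π.1 i % n) + y' * (A + B)
          else if h : i.val < L then n * π.2 ⟨i.val, h⟩ + π.1 i % n
          else π.1 i) * (z + i.val * m)
         + (if h : i.val < L then
              π.1 (Fin.castLE hLK ⟨i.val, h⟩) / n * (n * (y'+1) * z + i.val * (n * m)) else 0))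
        + y' * z * c i
        = π.1 i * ((y'+1) * z + i.val * m)
          + (if h : i.val < L then π.2 ⟨i.val, h⟩ * (n * z + i.val * (n * m)) else 0) := by
      intro i hi
      have hi0 : i.val ≠ 0 := fun hv => (Finset.mem_erase.mp hi).1 (Fin.ext hv)
      by_cases hiL : i.val < L
      · rw [if_neg hi0, dif_pos hiL, dif_pos hiL, dif_pos hiL]
        simp only [hc]
        have hcl : Fin.castLE hLK (⟨i.val, hiL⟩ : Fin L) = i := Fin.ext rfl
        rw [hcl, if_pos hiL]
        set a := π.1 i / n with ha
        set b := π.1 i % n with hb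
        have hab : π.1 i = n * a + b := by rw [ha, hb]; exact (Nat.div_add_mod _ _).symm
        rw [hab]; ring
      · rw [if_neg hi0, dif_neg hiL, dif_neg hiL, dif_neg hiL]
        simp only [hc]
        rw [if_neg hiL]
        ring
    -- identity at 0
    have hpt0 :
        ((if (z0:Fin K).val = 0 then
            n * π.2 ⟨0, hL⟩ + (y'+1) * (π.1 z0 % n) + y' * (A + B)
          else if h : (z0:Fin K).val < L then n * π.2 ⟨(z0:Fin K).val, h⟩ + π.1 z0 % n
          else π.1 z0) * (z + (z0:Fin K).val * m)
         + (if h : (z0:Fin K).val < L then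
              π.1 (Fin.castLE hLK ⟨(z0:Fin K).val, h⟩) / n * (n * (y'+1) * z + (z0:Fin K).val * (n * m)) else 0))
        = (π.1 z0 * ((y'+1) * z + (z0:Fin K).val * m)
          + (if h : (z0:Fin K).val < L then π.2 ⟨(z0:Fin K).val, h⟩ * (n * z + (z0:Fin K).val * (n * m)) else 0))
          + y' * z * ∑ i ∈ E, c i := by
      rw [hAB]
      have hv0 : (z0:Fin K).val = 0 := rfl
      rw [if_pos hv0, dif_pos (hv0 ▸ hL), dif_pos (hv0 ▸ hL)]
      have hcl : Fin.castLE hLK (⟨(z0:Fin K).val, hv0 ▸ hL⟩ : Fin L) = z0 := Fin.ext rfl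
      have h00 : (⟨(z0:Fin K).val, hv0 ▸ hL⟩ : Fin L) = ⟨0, hL⟩ := Fin.ext hv0
      rw [hcl, h00]
      simp only [hv0]
      set a := π.1 z0 / n with ha
      set b := π.1 z0 % n with hb
      have hab : π.1 z0 = n * a + b := by rw [ha, hb]; exact (Nat.div_add_mod _ _).symm
      rw [hab]; ring
    beta_reduce
    rw [hpt0, add_assoc]
    congr 1
    rw [Finset.mul_sum, ← Finset.sum_add_distrib]
    refine Finset.sum_congr rfl fun i hi => ?_
    rw [add_comm]
    exact hpt i hi
end

section
/- Let n > 1 and y > 1 be coprime. For the map φ of the main injection with L > 0, a partition π1 (with parts among {z_i : 1≤i≤K} ∪ {(nyz)_i : 1≤i≤L}) lies in the image of φ if and only if μ(π1) := ν(z_1,π1) − (y−1)·(Σ_{1<j≤L} R(z_j,π1) + Σ_{L<j≤K} ν(z_j,π1)) can be written as μ(π1) = a·n + b·y with integers a ≥ 0 and 0 ≤ b < n; moreover if such a representation exists it is unique. -/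
open Finset

theorem phi_image_characterization (n y K L m z : ℕ) (hn : 1 < n) (hy : 1 < y)
    (hco : Nat.Coprime n y) (hL : 0 < L) (hLK : L ≤ K) (hm : 0 < m) (hz : 0 < z)
    (π : (Fin K → ℕ) × (Fin L → ℕ)) :
    letI μ : ℤ := (π.1 ⟨0, lt_of_lt_of_le hL hLK⟩ : ℤ) - ((y : ℤ) - 1) *
      ((∑ j : Fin L, if j.val = 0 then 0 else ((π.1 (Fin.castLE hLK j) % n : ℕ) : ℤ)) +
       (∑ j : Fin K, if L ≤ j.val then (π.1 j : ℤ) else 0))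
    (π ∈ Set.range (phi n y K L hL hLK) ↔
      ∃ a b : ℤ, 0 ≤ a ∧ 0 ≤ b ∧ b < n ∧ μ = a * n + b * y) ∧
    ∀ a b a' b' : ℤ, 0 ≤ a → 0 ≤ b → b < n → 0 ≤ a' → 0 ≤ b' → b' < n →
      μ = a * n + b * y → μ = a' * n + b' * y → a = a' ∧ b = b' := by
  have hn0 : 0 < n := by omega
  constructor
  · constructor
    · rintro ⟨σ, rfl⟩
      refine ⟨σ.2 ⟨0, hL⟩, ((σ.1 ⟨0, lt_of_lt_of_le hL hLK⟩ % n : ℕ) : ℤ),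
        by positivity, by positivity, by exact_mod_cast Nat.mod_lt _ hn0, ?_⟩
      -- compute the components of phi σ
      have hzero : (phi n y K L hL hLK σ).1 ⟨0, lt_of_lt_of_le hL hLK⟩ =
          n * σ.2 ⟨0, hL⟩ + y * (σ.1 ⟨0, lt_of_lt_of_le hL hLK⟩ % n) + (y - 1) *
          ((∑ j : Fin L, if j.val = 0 then 0 else σ.1 (Fin.castLE hLK j) % n) +
           (∑ j : Fin K, if L ≤ j.val then σ.1 j else 0)) := by
        simp [phi]
      have hsum1 : (∑ j : Fin L, if j.val = 0 then 0 else
            (((phi n y K L hL hLK σ).1 (Fin.castLE hLK j) % n : ℕ) : ℤ)) =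
          ∑ j : Fin L, if j.val = 0 then 0 else ((σ.1 (Fin.castLE hLK j) % n : ℕ) : ℤ) := by
        refine Finset.sum_congr rfl fun j _ => ?_
        by_cases hj : j.val = 0
        · simp [hj]
        · have hjl : j.val < L := j.isLt
          simp only [hj, if_false]
          congr 1
          show ((phi n y K L hL hLK σ).1 (Fin.castLE hLK j) % n : ℕ) = _
          simp [phi, hj, hjl, Nat.mul_add_mod, Nat.mod_mod_of_dvd]
      have hsum2 : (∑ j : Fin K, if L ≤ j.val then
            (((phi n y K L hL hLK σ).1 j : ℕ) : ℤ) else 0) =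
          ∑ j : Fin K, if L ≤ j.val then ((σ.1 j : ℕ) : ℤ) else 0 := by
        refine Finset.sum_congr rfl fun j _ => ?_
        by_cases hj : L ≤ j.val
        · have h0 : j.val ≠ 0 := by omega
          have h1 : ¬ j.val < L := by omega
          simp [phi, hj, h0, h1]
        · simp [hj]
      rw [hsum1, hsum2, hzero]
      push_cast [Nat.cast_sub (le_of_lt hy)]
      ring
    · rintro ⟨a, b, ha, hb, hbn, hμ⟩
      have hbt : b.toNat < n := by omega
      set S1 : ℕ := ∑ j : Fin L, if j.val = 0 then 0 else π.1 (Fin.castLE hLK j) % n with hS1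
      set S2 : ℕ := ∑ j : Fin K, if L ≤ j.val then π.1 j else 0 with hS2
      have hc1 : ((S1 : ℕ) : ℤ) =
          ∑ j : Fin L, if j.val = 0 then 0 else ((π.1 (Fin.castLE hLK j) % n : ℕ) : ℤ) := by
        rw [hS1]; push_cast; rfl
      have hc2 : ((S2 : ℕ) : ℤ) =
          ∑ j : Fin K, if L ≤ j.val then ((π.1 j : ℕ) : ℤ) else 0 := by
        rw [hS2]; push_cast; rfl
      have hπ0 : π.1 ⟨0, lt_of_lt_of_le hL hLK⟩ =
          n * a.toNat + y * b.toNat + (y - 1) * (S1 + S2) := by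
        have h1 : ((π.1 ⟨0, lt_of_lt_of_le hL hLK⟩ : ℕ) : ℤ) =
            ((n * a.toNat + y * b.toNat + (y - 1) * (S1 + S2) : ℕ) : ℤ) := by
          rw [← hc1, ← hc2] at hμ
          push_cast [Nat.cast_sub (le_of_lt hy), Int.toNat_of_nonneg ha,
            Int.toNat_of_nonneg hb]
          linarith
        exact_mod_cast h1
      refine ⟨⟨fun j => if j.val = 0 then n * π.2 ⟨0, hL⟩ + b.toNat
          else if h : j.val < L then n * π.2 ⟨j.val, h⟩ + π.1 j % n else π.1 j,
        fun j => if j.val = 0 then a.toNat else π.1 (Fin.castLE hLK j) / n⟩, ?_⟩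
      have hmod0 : (n * π.2 ⟨0, hL⟩ + b.toNat) % n = b.toNat := by
        rw [Nat.mul_add_mod, Nat.mod_eq_of_lt hbt]
      refine Prod.ext (funext fun i => ?_) (funext fun i => ?_)
      · by_cases hi : i.val = 0
        · have hie : i = ⟨0, lt_of_lt_of_le hL hLK⟩ := Fin.ext hi
          subst hie
          simp only [phi]
          norm_num [hmod0]
          rw [hπ0]
          congr 2
          congr 1
          · rw [hS1]
            refine Finset.sum_congr rfl fun j _ => ?_
            by_cases hj : j.val = 0
            · simp [hj]
            · simp only [hj, if_false]
              rw [Nat.mul_add_mod, Nat.mod_mod_of_dvd _ dvd_rfl]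
          · rw [hS2]
            refine Finset.sum_congr rfl fun j _ => ?_
            by_cases hj : L ≤ j.val
            · have h0 : ¬ j.val = 0 := by omega
              have h1 : ¬ j.val < L := by omega
              simp [hj, h0, h1]
            · simp [hj]
        · by_cases hil : i.val < L
          · show (if i.val = 0 then _ else if h : i.val < L then
                n * (if i.val = 0 then a.toNat else π.1 (Fin.castLE hLK ⟨i.val, h⟩) / n) +
                  (if i.val = 0 then _ else if h' : i.val < L then
                    n * π.2 ⟨i.val, h'⟩ + π.1 i % n else π.1 i) % n
              else _) = π.1 i
            rw [if_neg hi, dif_pos hil, if_neg hi, if_neg hi, dif_pos hil,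
              Nat.mul_add_mod, Nat.mod_mod_of_dvd _ dvd_rfl]
            have : Fin.castLE hLK (⟨i.val, hil⟩ : Fin L) = i := Fin.ext rfl
            rw [this]
            exact Nat.div_add_mod _ n
          · show (if i.val = 0 then _ else if h : i.val < L then _ else
                (if i.val = 0 then _ else if h : i.val < L then _ else π.1 i)) = π.1 i
            rw [if_neg hi, dif_neg hil, if_neg hi, dif_neg hil]
      · by_cases hi : i.val = 0
        · have hie : i = ⟨0, hL⟩ := Fin.ext hi
          subst hie
          simp only [phi]
          norm_num
          rw [Nat.mul_add_div hn0, Nat.div_eq_of_lt hbt, add_zero]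
        · have hil : i.val < L := i.isLt
          simp only [phi, Fin.coe_castLE]
          rw [if_neg hi, dif_pos hil, Nat.mul_add_div hn0,
            Nat.div_eq_of_lt (Nat.mod_lt _ hn0), add_zero]
  · intro a b a' b' ha hb hbn ha' hb' hbn' h1 h2
    have h : a * n + b * y = a' * n + b' * y := by rw [← h1, ← h2]
    have hcop : IsCoprime (n : ℤ) (y : ℤ) := by
      rw [Int.isCoprime_iff_gcd_eq_one]; exact_mod_cast hco
    have hdvd : (n : ℤ) ∣ (b' - b) := by
      have h2' : (n : ℤ) ∣ (b' - b) * y := ⟨a - a', by ring_nf; linarith⟩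
      exact hcop.dvd_of_dvd_mul_right h2'
    have hb0 : b' - b = 0 :=
      Int.eq_zero_of_abs_lt_dvd hdvd (by rw [abs_lt]; constructor <;> linarith)
    have hbb : b = b' := by linarith
    refine ⟨?_, hbb⟩
    have hnz : (n : ℤ) ≠ 0 := by positivity
    subst hbb
    exact mul_right_cancel₀ hnz (by linarith)
end

section
/- For positive integers m, n, y, z with gcd(n,y)=1, integers K ≥ L ≥ 0, and integer f ≥ 0, let P̃_1(f,x) count partitions of x into parts z+(i−1)m with 1≤i≤K and parts nyz+(i−1)nm with 1≤i≤L whose 'flattened' norm (obtained by replacing each part z+(i−1)m by z and each part nyz+(i−1)nm by nyz and summing) equals zf; let P̃_2(f,x) count the analogous partitions into parts yz+(i−1)m (1≤i≤K) and nz+(i−1)nm (1≤i≤L) with flattened norm zf (replacing parts by yz and nz respectively). Then P̃_1(f,x) ≥ P̃_2(f,x) for all x. -/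
/-!
Write a partition counted by `P̃₂` as multiplicities `a i` of the parts `y z + i m` and `b j` of the
parts `n z + j n m`, and split `a j = n q j + r j` with `r j < n` for `j < L`. Send it to the
partition with `q j` copies of `n y z + j n m`, `r i + n b i` copies of `z + i m`, and in addition
`(y - 1) ∑ r` copies of the smallest part `z`. Both the norm and the flattened norm are preserved.
The map is injective: for `i ≠ 0` the pair `(r i, b i)` is read off from `r i + n b i`, and then at
`i = 0` from `y r 0 + n b 0`, because `n` and `y` are coprime and `r 0 < n`.
-/

open Finset Function

theorem Nat.eq_and_eq_of_mul_add_mul_eq {n y r r' b b' : ℕ} (hco : n.Coprime y) (hy : 0 < y)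
    (hsplit : (r < n ∧ r' < n) ∨ (b = 0 ∧ b' = 0)) (h : y * r + n * b = y * r' + n * b') :
    r = r' ∧ b = b' := by
  rcases hsplit with ⟨hr, hr'⟩ | ⟨rfl, rfl⟩
  · have hmod : y * r ≡ y * r' [MOD n] := by
      simpa [Nat.ModEq, Nat.add_mul_mod_self_left] using congrArg (· % n) h
    obtain rfl : r = r' := by
      simpa [Nat.ModEq, Nat.mod_eq_of_lt hr, Nat.mod_eq_of_lt hr'] using
        Nat.ModEq.cancel_left_of_coprime hco hmod
    exact ⟨rfl, Nat.eq_of_mul_eq_mul_left (n := n) (by omega) (by omega)⟩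
  · simp only [mul_zero, add_zero] at h
    exact ⟨Nat.eq_of_mul_eq_mul_left hy h, rfl⟩

theorem Set.finite_setOf_sum_mul_le {ι : Type*} [Fintype ι] {w : ι → ℕ} (hw : ∀ i, 0 < w i)
    (x : ℕ) : {a : ι → ℕ | ∑ i, a i * w i ≤ x}.Finite := by
  classical
  refine (Set.finite_Iic fun _ => x).subset fun a ha i => ?_
  calc a i ≤ a i * w i := Nat.le_mul_of_pos_right _ (hw i)
    _ ≤ ∑ i, a i * w i :=
      single_le_sum (f := fun i => a i * w i) (fun _ _ => Nat.zero_le _) (Finset.mem_univ i)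
    _ ≤ x := ha

theorem Fintype.sum_extend_zero_mul {ι κ : Type*} [Fintype ι] [Fintype κ] (e : κ ↪ ι)
    (b : κ → ℕ) (w : ι → ℕ) :
    ∑ i, extend e b 0 i * w i = ∑ j, b j * w (e j) := by
  classical
  rw [← Finset.sum_subset (subset_univ (univ.map e)), Finset.sum_map]
  · simp [e.injective.extend_apply]
  · intro i _ hi
    rw [extend_apply' _ _ _ (by simpa using hi), Pi.zero_apply, zero_mul]

namespace PartTransfer

variable {ι κ : Type*} (e : κ ↪ ι) (n : ℕ)

noncomputable def lowPart (a : ι → ℕ) : ι → ℕ := extend e (fun j => a (e j) % n) a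

noncomputable def highPart (a : ι → ℕ) : ι → ℕ := extend e (fun j => a (e j) / n) 0

theorem lowPart_add_mul_highPart (a : ι → ℕ) (i : ι) :
    lowPart e n a i + n * highPart e n a i = a i := by
  by_cases hi : ∃ j, e j = i
  · obtain ⟨j, rfl⟩ := hi
    simp [lowPart, highPart, e.injective.extend_apply, Nat.mod_add_div]
  · simp [lowPart, highPart, extend_apply' _ _ _ hi]

theorem lowPart_lt_or_extend_eq_zero (hn : 0 < n) (a a' : ι → ℕ) (b b' : κ → ℕ) (i : ι) :
    (lowPart e n a i < n ∧ lowPart e n a' i < n) ∨ (extend e b 0 i = 0 ∧ extend e b' 0 i = 0) := by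
  by_cases hi : ∃ j, e j = i
  · obtain ⟨j, rfl⟩ := hi
    simp [lowPart, e.injective.extend_apply, Nat.mod_lt _ hn]
  · simp [extend_apply' _ _ _ hi]

variable [Fintype ι] [DecidableEq ι] (y : ℕ) (i₀ : ι)

noncomputable def transfer (π : (ι → ℕ) × (κ → ℕ)) : (ι → ℕ) × (κ → ℕ) :=
  (fun i => lowPart e n π.1 i + n * extend e π.2 0 i +
      Pi.single (M := fun _ => ℕ) i₀ ((y - 1) * ∑ i, lowPart e n π.1 i) i,
    fun j => π.1 (e j) / n)

/-- The `(y - 1) ∑ lowPart` extra parts are placed at `i₀`, which carries no offset, so each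
residue still contributes `y s` in total. -/
theorem transfer_weight [Fintype κ] (hy : 0 < y) (s : ℕ) (u : ι → ℕ) (hu : u i₀ = 0)
    (π : (ι → ℕ) × (κ → ℕ)) :
    ∑ i, (transfer e n y i₀ π).1 i * (s + u i) +
        ∑ j, (transfer e n y i₀ π).2 j * (n * (y * s + u (e j))) =
      ∑ i, π.1 i * (y * s + u i) + ∑ j, π.2 j * (n * (s + u (e j))) := by
  obtain ⟨Y, rfl⟩ : ∃ Y, y = Y + 1 := ⟨y - 1, by omega⟩
  obtain ⟨a, b⟩ := π
  have hsingle : ∑ i, Pi.single (M := fun _ => ℕ) i₀ (Y * ∑ i, lowPart e n a i) i * (s + u i)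
      = ∑ i, Y * lowPart e n a i * s := by
    simp [Pi.single_apply, hu, Finset.mul_sum, Finset.sum_mul]
  have hhigh : ∑ i, highPart e n a i * (n * ((Y + 1) * s + u i)) =
      ∑ j, a (e j) / n * (n * ((Y + 1) * s + u (e j))) :=
    Fintype.sum_extend_zero_mul e _ _
  have hextend := Fintype.sum_extend_zero_mul e b fun i => n * (s + u i)
  calc _ = ∑ i, ((lowPart e n a i * (s + u i) + extend e b 0 i * (n * (s + u i))) +
          Pi.single (M := fun _ => ℕ) i₀ (Y * ∑ i, lowPart e n a i) i * (s + u i)) +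
        ∑ i, highPart e n a i * (n * ((Y + 1) * s + u i)) := by
        rw [hhigh]
        exact congrArg (· + _)
          (sum_congr rfl fun i _ => by simp only [transfer, Nat.add_sub_cancel]; ring)
    _ = ∑ i, ((lowPart e n a i + n * highPart e n a i) * ((Y + 1) * s + u i) +
          extend e b 0 i * (n * (s + u i))) := by
        rw [sum_add_distrib, hsingle, ← sum_add_distrib, ← sum_add_distrib]
        exact sum_congr rfl fun i _ => by ring
    _ = _ := by simp only [lowPart_add_mul_highPart, sum_add_distrib, hextend]

theorem transfer_injective (hn : 0 < n) (hy : 0 < y) (hco : n.Coprime y) :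
    Injective (transfer e n y i₀ : (ι → ℕ) × (κ → ℕ) → _) := by
  rintro ⟨a, b⟩ ⟨a', b'⟩ h
  simp only [transfer, Prod.mk.injEq, funext_iff] at h
  obtain ⟨hfst, hsnd⟩ := h
  have hsplit := lowPart_lt_or_extend_eq_zero e n hn a a' b b'
  have hoff : ∀ i ≠ i₀, lowPart e n a i = lowPart e n a' i ∧ extend e b 0 i = extend e b' 0 i :=
    fun i hi => Nat.eq_and_eq_of_mul_add_mul_eq (Nat.coprime_one_right n) one_pos (hsplit i)
      (by simpa [Pi.single_apply, hi] using hfst i)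
  have hsum : ∑ i ∈ univ.erase i₀, lowPart e n a i = ∑ i ∈ univ.erase i₀, lowPart e n a' i :=
    sum_congr rfl fun i hi => (hoff i (ne_of_mem_erase hi)).1
  have hon : lowPart e n a i₀ = lowPart e n a' i₀ ∧ extend e b 0 i₀ = extend e b' 0 i₀ := by
    refine Nat.eq_and_eq_of_mul_add_mul_eq hco hy (hsplit i₀) ?_
    have h₀ := hfst i₀
    rw [Pi.single_eq_same, Pi.single_eq_same, ← add_sum_erase _ _ (mem_univ i₀),
      ← add_sum_erase _ _ (mem_univ i₀), hsum] at h₀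
    obtain ⟨Y, rfl⟩ : ∃ Y, y = Y + 1 := ⟨y - 1, by omega⟩
    simp only [Nat.add_sub_cancel] at h₀
    linarith
  have hlow (i : ι) : lowPart e n a i = lowPart e n a' i ∧ extend e b 0 i = extend e b' 0 i := by
    by_cases hi : i = i₀
    · exact hi ▸ hon
    · exact hoff i hi
  have hhigh : highPart e n a = highPart e n a' := by simp only [highPart, hsnd]
  refine Prod.ext (funext fun i => ?_) (funext fun j => ?_)
  · dsimp only
    rw [← lowPart_add_mul_highPart e n a i, ← lowPart_add_mul_highPart e n a' i, (hlow i).1,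
      hhigh]
  · simpa [e.injective.extend_apply] using (hlow (e j)).2

end PartTransfer

theorem flattened_refinement_general (m n y z K L f : ℕ) (hn : 0 < n) (hy : 0 < y)
    (hz : 0 < z) (hco : Nat.Coprime n y) (hKL : L ≤ K) (x : ℕ) :
    Set.ncard {π : (Fin K → ℕ) × (Fin L → ℕ) |
        (∑ i, π.1 i * (y * z + i.val * m)) + (∑ i, π.2 i * (n * z + i.val * (n * m))) = x ∧
        (∑ i, π.1 i * (y * z)) + (∑ i, π.2 i * (n * z)) = z * f}
      ≤ Set.ncard {π : (Fin K → ℕ) × (Fin L → ℕ) |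
        (∑ i, π.1 i * (z + i.val * m)) + (∑ i, π.2 i * (n * y * z + i.val * (n * m))) = x ∧
        (∑ i, π.1 i * z) + (∑ i, π.2 i * (n * y * z)) = z * f} := by
  rcases K.eq_zero_or_pos with rfl | hK
  · obtain rfl : L = 0 := by omega
    simp
  let T := PartTransfer.transfer (Fin.castLEEmb hKL) n y ⟨0, hK⟩
  have hweight (t : ℕ) (π : (Fin K → ℕ) × (Fin L → ℕ)) :
      (∑ i, (T π).1 i * (z + i.val * t)) + ∑ j, (T π).2 j * (n * y * z + j.val * (n * t)) =
        (∑ i, π.1 i * (y * z + i.val * t)) + ∑ j, π.2 j * (n * z + j.val * (n * t)) := by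
    convert PartTransfer.transfer_weight (Fin.castLEEmb hKL) n y ⟨0, hK⟩ hy z
      (fun i => i.val * t) (zero_mul t) π using 3 <;>
      simp only [Fin.coe_castLEEmb, Fin.val_castLE] <;> ring
  have hfinite := (Set.finite_setOf_sum_mul_le (w := fun i : Fin K => z + i.val * m)
    (fun _ => by positivity) x).prod
    (Set.finite_setOf_sum_mul_le (w := fun j : Fin L => n * y * z + j.val * (n * m))
      (fun _ => by positivity) x)
  refine Set.ncard_le_ncard_of_injOn T (fun π ⟨hx, hf⟩ => ⟨(hweight m π).trans hx, ?_⟩)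
    (PartTransfer.transfer_injective _ n y _ hn hy hco).injOn
    (hfinite.subset fun π ⟨hx, _⟩ => ⟨hx.le.trans' le_self_add, hx.le.trans' le_add_self⟩)
  simpa using (hweight 0 π).trans hf

theorem flattened_refinement (m n y z K L f : ℕ) (hm : 0 < m) (hn : 0 < n) (hy : 0 < y)
    (hz : 0 < z) (hco : Nat.Coprime n y) (hKL : L ≤ K) (x : ℕ) :
    Set.ncard {π : (Fin K → ℕ) × (Fin L → ℕ) |
        (∑ i, π.1 i * (y * z + i.val * m)) + (∑ i, π.2 i * (n * z + i.val * (n * m))) = x ∧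
        (∑ i, π.1 i * (y * z)) + (∑ i, π.2 i * (n * z)) = z * f}
      ≤ Set.ncard {π : (Fin K → ℕ) × (Fin L → ℕ) |
        (∑ i, π.1 i * (z + i.val * m)) + (∑ i, π.2 i * (n * y * z + i.val * (n * m))) = x ∧
        (∑ i, π.1 i * z) + (∑ i, π.2 i * (n * y * z)) = z * f} :=
  flattened_refinement_general m n y z K L f hn hy hz hco hKL x
end
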